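/- arXiv:1909.05312 — 3 statements merged into one kernel-verified Lean document; each statement's English description precedes it below -/
import Mathlib

section
/- If y and y′ are two distinct elements of Y, then B(y,y′) = 0 or B(y,y′) = 1. -/
open scoped TensorProduct

/-- The lattice `L = ℤ⁷` with standard basis `ℓ, e₁, …, e₆`. -/
abbrev L : Type := Fin 7 → ℤ

/-- The symmetric bilinear form `B(x,y) = x₀y₀ − x₁y₁ − ⋯ − x₆y₆`. -/
def B (x y : L) : ℤ :=
  x 0 * y 0 - (x 1 * y 1 + x 2 * y 2 + x 3 * y 3 + x 4 * y 4 + x 5 * y 5 + x 6 * y 6)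

/-- `h = 3ℓ − e₁ − ⋯ − e₆`, the hyperplane class, with `B(h,h) = 3`. -/
def hv : L := ![3, -1, -1, -1, -1, -1, -1]

/-- The set of lines: `Y = {y ∈ L : B(h,y) = 1 ∧ B(y,y) = −1}`. -/
def Yset : Set L := {y | B hv y = 1 ∧ B y y = -1}

/-- The set of roots: `R = {α ∈ L : B(h,α) = 0 ∧ B(α,α) = −2}`. -/
def Rset : Set L := {a | B hv a = 0 ∧ B a a = -2}

lemma cauchy7 (c0 c1 c2 c3 c4 c5 c6 t : ℤ) (h : 3*c0 + (c1+c2+c3+c4+c5+c6) = t) :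
    3*(c0^2 - (c1^2+c2^2+c3^2+c4^2+c5^2+c6^2)) ≤ t^2 := by
  have hs2 : (c1+c2+c3+c4+c5+c6)^2 = (t - 3*c0)^2 := by
    rw [show c1+c2+c3+c4+c5+c6 = t - 3*c0 by linarith]
  have hP : (0:ℤ) ≤ (c1-c2)^2 + (c1-c3)^2 + (c1-c4)^2 + (c1-c5)^2 + (c1-c6)^2
      + (c2-c3)^2 + (c2-c4)^2 + (c2-c5)^2 + (c2-c6)^2
      + (c3-c4)^2 + (c3-c5)^2 + (c3-c6)^2
      + (c4-c5)^2 + (c4-c6)^2 + (c5-c6)^2 := by positivity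
  have id1 : (c1-c2)^2 + (c1-c3)^2 + (c1-c4)^2 + (c1-c5)^2 + (c1-c6)^2
      + (c2-c3)^2 + (c2-c4)^2 + (c2-c5)^2 + (c2-c6)^2
      + (c3-c4)^2 + (c3-c5)^2 + (c3-c6)^2
      + (c4-c5)^2 + (c4-c6)^2 + (c5-c6)^2
      = 6*(c1^2+c2^2+c3^2+c4^2+c5^2+c6^2) - (c1+c2+c3+c4+c5+c6)^2 := by ring
  have h3 := sq_nonneg (t - c0)
  linarith [hP, hs2, id1, h3]

lemma zero7 (c0 c1 c2 c3 c4 c5 c6 : ℤ) (h : 3*c0 + (c1+c2+c3+c4+c5+c6) = 0)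
    (hq : c0^2 - (c1^2+c2^2+c3^2+c4^2+c5^2+c6^2) = 0) :
    c0 = 0 ∧ c1 = 0 ∧ c2 = 0 ∧ c3 = 0 ∧ c4 = 0 ∧ c5 = 0 ∧ c6 = 0 := by
  have hs2 : (c1+c2+c3+c4+c5+c6)^2 = (0 - 3*c0)^2 := by
    rw [show c1+c2+c3+c4+c5+c6 = 0 - 3*c0 by linarith]
  have hP : (0:ℤ) ≤ (c1-c2)^2 + (c1-c3)^2 + (c1-c4)^2 + (c1-c5)^2 + (c1-c6)^2
      + (c2-c3)^2 + (c2-c4)^2 + (c2-c5)^2 + (c2-c6)^2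
      + (c3-c4)^2 + (c3-c5)^2 + (c3-c6)^2
      + (c4-c5)^2 + (c4-c6)^2 + (c5-c6)^2 := by positivity
  have id1 : (c1-c2)^2 + (c1-c3)^2 + (c1-c4)^2 + (c1-c5)^2 + (c1-c6)^2
      + (c2-c3)^2 + (c2-c4)^2 + (c2-c5)^2 + (c2-c6)^2
      + (c3-c4)^2 + (c3-c5)^2 + (c3-c6)^2
      + (c4-c5)^2 + (c4-c6)^2 + (c5-c6)^2
      = 6*(c1^2+c2^2+c3^2+c4^2+c5^2+c6^2) - (c1+c2+c3+c4+c5+c6)^2 := by ring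
  -- 0 = 3*c0^2 + P  ⇒ c0^2 ≤ 0
  have hc0sq : c0^2 ≤ 0 := by linarith [hP, hs2, id1]
  have hc0 : c0 = 0 := by
    have : c0^2 = 0 := le_antisymm hc0sq (sq_nonneg c0)
    exact pow_eq_zero_iff two_ne_zero |>.mp this
  -- sum of squares of c1..c6 equals c0^2 = 0
  have hS : c1^2+c2^2+c3^2+c4^2+c5^2+c6^2 = 0 := by
    have := hq; rw [hc0] at this; linarith
  have z : ∀ a : ℤ, a^2 ≤ 0 → a = 0 := fun a ha =>
    pow_eq_zero_iff two_ne_zero |>.mp (le_antisymm ha (sq_nonneg a))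
  refine ⟨hc0, z _ ?_, z _ ?_, z _ ?_, z _ ?_, z _ ?_, z _ ?_⟩ <;>
    linarith [hS, sq_nonneg c1, sq_nonneg c2, sq_nonneg c3, sq_nonneg c4, sq_nonneg c5, sq_nonneg c6]

/-- If `y` and `y′` are two distinct elements of `Y`, then `B(y,y′) = 0` or `B(y,y′) = 1`. -/
theorem lines_intersection (y y' : L) (hy : y ∈ Yset) (hy' : y' ∈ Yset) (hne : y ≠ y') :
    B y y' = 0 ∨ B y y' = 1 := by
  obtain ⟨h1, h2⟩ := hy
  obtain ⟨h1', h2'⟩ := hy'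
  have Hy : 3 * y 0 + (y 1 + y 2 + y 3 + y 4 + y 5 + y 6) = 1 := by
    have : (3:ℤ) * y 0 - (-1 * y 1 + -1 * y 2 + -1 * y 3 + -1 * y 4 + -1 * y 5 + -1 * y 6) = 1 := h1
    linarith
  have Hy' : 3 * y' 0 + (y' 1 + y' 2 + y' 3 + y' 4 + y' 5 + y' 6) = 1 := by
    have : (3:ℤ) * y' 0 - (-1 * y' 1 + -1 * y' 2 + -1 * y' 3 + -1 * y' 4 + -1 * y' 5 + -1 * y' 6) = 1 := h1'
    linarith
  have Qy : y 0^2 - (y 1^2 + y 2^2 + y 3^2 + y 4^2 + y 5^2 + y 6^2) = -1 := by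
    have : y 0 * y 0 - (y 1 * y 1 + y 2 * y 2 + y 3 * y 3 + y 4 * y 4 + y 5 * y 5 + y 6 * y 6) = -1 := h2
    linarith [this]
  have Qy' : y' 0^2 - (y' 1^2 + y' 2^2 + y' 3^2 + y' 4^2 + y' 5^2 + y' 6^2) = -1 := by
    have : y' 0 * y' 0 - (y' 1 * y' 1 + y' 2 * y' 2 + y' 3 * y' 3 + y' 4 * y' 4 + y' 5 * y' 5 + y' 6 * y' 6) = -1 := h2'
    linarith [this]
  have hk : B y y' = y 0 * y' 0 - (y 1 * y' 1 + y 2 * y' 2 + y 3 * y' 3 + y 4 * y' 4 + y 5 * y' 5 + y 6 * y' 6) := rfl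
  -- upper bound via z = h - y - y'
  have hub : B y y' ≤ 1 := by
    have hz := cauchy7 (3 - y 0 - y' 0) (-1 - y 1 - y' 1) (-1 - y 2 - y' 2) (-1 - y 3 - y' 3)
      (-1 - y 4 - y' 4) (-1 - y 5 - y' 5) (-1 - y 6 - y' 6) 1 (by linarith)
    have e : (3 - y 0 - y' 0)^2 - ((-1 - y 1 - y' 1)^2 + (-1 - y 2 - y' 2)^2 + (-1 - y 3 - y' 3)^2
        + (-1 - y 4 - y' 4)^2 + (-1 - y 5 - y' 5)^2 + (-1 - y 6 - y' 6)^2) = 2 * B y y' - 3 := by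
      rw [hk]; linear_combination Qy + Qy' - 2*Hy - 2*Hy'
    rw [e] at hz
    omega
  -- lower bound via d = y - y'
  have hd0 : 3*(y 0 - y' 0) + ((y 1 - y' 1)+(y 2 - y' 2)+(y 3 - y' 3)+(y 4 - y' 4)+(y 5 - y' 5)+(y 6 - y' 6)) = 0 := by
    linarith
  have ed : (y 0 - y' 0)^2 - ((y 1 - y' 1)^2+(y 2 - y' 2)^2+(y 3 - y' 3)^2+(y 4 - y' 4)^2+(y 5 - y' 5)^2+(y 6 - y' 6)^2)
      = -2 - 2 * B y y' := by
    rw [hk]; linear_combination Qy + Qy'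
  have hlb : -1 ≤ B y y' := by
    have hz := cauchy7 (y 0 - y' 0) (y 1 - y' 1) (y 2 - y' 2) (y 3 - y' 3) (y 4 - y' 4) (y 5 - y' 5) (y 6 - y' 6) 0 hd0
    rw [ed] at hz
    omega
  -- exclude B y y' = -1
  have hneq : B y y' ≠ -1 := by
    intro hm1
    have hq0 : (y 0 - y' 0)^2 - ((y 1 - y' 1)^2+(y 2 - y' 2)^2+(y 3 - y' 3)^2+(y 4 - y' 4)^2+(y 5 - y' 5)^2+(y 6 - y' 6)^2) = 0 := by
      rw [ed, hm1]; ring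
    obtain ⟨z0, z1, z2, z3, z4, z5, z6⟩ := zero7 _ _ _ _ _ _ _ hd0 hq0
    apply hne
    funext i
    fin_cases i
    · exact sub_eq_zero.mp z0
    · exact sub_eq_zero.mp z1
    · exact sub_eq_zero.mp z2
    · exact sub_eq_zero.mp z3
    · exact sub_eq_zero.mp z4
    · exact sub_eq_zero.mp z5
    · exact sub_eq_zero.mp z6
  omega
end

section
/- Every g ∈ G maps Y bijectively to itself and the induced permutation of Y is an automorphism of the graph Ω; the resulting group homomorphism G → Aut(Ω) is bijective (an isomorphism of groups). -/
/-!
Reflections in roots are isometries of `B` fixing `h`, so `G` permutes the lines preserving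
their intersection numbers, which gives `G → Aut(Ω)`; it is injective because the lines span `L`.
Conversely, distinct lines meet in `0` or `1`, so an automorphism `φ` of `Ω` preserves `B` on
lines. Listing the 27 lines as `lines 0, …, lines 26`, we move `φ (lines k)` back to `lines k`
one `k` at a time by elements of `G` fixing the lines already placed: for every line having the
same intersection numbers with `lines 0, …, lines (k - 1)` as `lines k`, an explicit word in
reflections does this, as checked by evaluation. Every line is in the list because
Cauchy–Schwarz bounds its coordinates.
-/

open scoped TensorProduct

lemma B_comm (x y : L) : B x y = B y x := by unfold B; ring

/-- The graph `Ω` on the 27 lines: distinct `y, y′` adjacent iff `B(y,y′) = 1`. -/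
def Ω : SimpleGraph ↥Yset where
  Adj a b := a ≠ b ∧ B a.1 b.1 = 1
  symm := by
    refine ⟨?_⟩
    rintro a b ⟨hne, hB⟩
    exact ⟨hne.symm, by rw [B_comm]; exact hB⟩
  loopless := by refine ⟨?_⟩; rintro a ⟨hne, _⟩; exact hne rfl

/-- `g` is a reflection `s_α` for some root `α ∈ R`. -/
def IsReflection (g : L ≃ₗ[ℤ] L) : Prop := ∃ α ∈ Rset, ∀ x, g x = x + B x α • α

/-- `G = Weyl(E₆)`, the subgroup of `GL(L)` generated by the reflections `s_α`, `α ∈ R`. -/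
def G : Subgroup (L ≃ₗ[ℤ] L) := Subgroup.closure {g | IsReflection g}

lemma B_add_left (x y z : L) : B (x + y) z = B x z + B y z := by
  simp only [B, Pi.add_apply]; ring

lemma B_smul_left (c : ℤ) (x z : L) : B (c • x) z = c * B x z := by
  simp only [B, Pi.smul_apply, smul_eq_mul]; ring

lemma B_add_right (x y z : L) : B x (y + z) = B x y + B x z := by
  simp only [B, Pi.add_apply]; ring

lemma B_smul_right (c : ℤ) (x z : L) : B x (c • z) = c * B x z := by
  simp only [B, Pi.smul_apply, smul_eq_mul]; ring

def Bform : LinearMap.BilinForm ℤ L :=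
  LinearMap.mk₂ ℤ B B_add_left B_smul_left B_add_right B_smul_right

def reflection (α : L) (hα : B α α = -2) : L ≃ₗ[ℤ] L :=
  Module.reflection (x := α) (f := -Bform.flip α) (by simp [Bform, hα])

lemma reflection_apply {α : L} (hα : B α α = -2) (x : L) :
    reflection α hα x = x + B x α • α := by
  simp [reflection, Module.reflection_apply, Bform]

lemma reflection_mem_G {α : L} (hα : α ∈ Rset) : reflection α hα.2 ∈ G :=
  Subgroup.subset_closure ⟨α, hα, reflection_apply hα.2⟩

def isometryFixingHv : Subgroup (L ≃ₗ[ℤ] L) where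
  carrier := {g | (∀ x y, B (g x) (g y) = B x y) ∧ g hv = hv}
  mul_mem' {g g'} hg hg' :=
    ⟨fun x y => (hg.1 _ _).trans (hg'.1 x y), by simp [hg.2, hg'.2]⟩
  one_mem' := ⟨fun _ _ => rfl, rfl⟩
  inv_mem' {g} hg := by
    refine ⟨fun x y => ?_, ?_⟩
    · simpa using (hg.1 (g⁻¹ x) (g⁻¹ y)).symm
    · simpa using congrArg g.symm hg.2.symm

lemma isReflection_mem_isometryFixingHv {g : L ≃ₗ[ℤ] L} (hg : IsReflection g) :
    g ∈ isometryFixingHv := by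
  obtain ⟨α, ⟨hα0, hα2⟩, hg⟩ := hg
  refine ⟨fun x y => ?_, by rw [hg, hα0, zero_smul, add_zero]⟩
  rw [hg, hg, B_add_left, B_add_right, B_add_right, B_smul_left, B_smul_right, B_smul_right,
    B_smul_left, hα2, B_comm α y]
  ring

lemma G_le_isometryFixingHv : G ≤ isometryFixingHv :=
  (Subgroup.closure_le (k := {g | IsReflection g}) _).2 fun _ => isReflection_mem_isometryFixingHv

lemma apply_mem_Yset_iff {g : L ≃ₗ[ℤ] L} (hg : g ∈ isometryFixingHv) (y : L) :
    g y ∈ Yset ↔ y ∈ Yset := by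
  change B hv (g y) = 1 ∧ B (g y) (g y) = -1 ↔ B hv y = 1 ∧ B y y = -1
  rw [← hg.1 hv y, hg.2, hg.1]

lemma bijOn_Yset {g : L ≃ₗ[ℤ] L} (hg : g ∈ isometryFixingHv) : Set.BijOn g Yset Yset :=
  Equiv.bijOn (e := g.toEquiv) (apply_mem_Yset_iff hg)

def lineAut {g : L ≃ₗ[ℤ] L} (hg : g ∈ isometryFixingHv) : Ω ≃g Ω where
  toEquiv := g.toEquiv.subtypeEquiv fun y => (apply_mem_Yset_iff hg y).symm
  map_rel_iff' := by simp [Ω, hg.1]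

lemma B_hv_eq (y : L) : B hv y = 3 * y 0 + ∑ i : Fin 6, y i.succ := by
  simp only [B, hv, Fin.sum_univ_six, Fin.succ_zero_eq_one, Fin.succ_one_eq_two, Fin.reduceSucc,
    Matrix.cons_val]
  ring

lemma B_self_eq (y : L) : B y y = y 0 ^ 2 - ∑ i : Fin 6, y i.succ ^ 2 := by
  simp only [B, Fin.sum_univ_six, Fin.succ_zero_eq_one, Fin.succ_one_eq_two, Fin.reduceSucc]
  ring

lemma abs_le_one_of_mul_le {x : ℤ} (h : x * (x + 1) ≤ 0 ∨ x * (x - 1) ≤ 0) : |x| ≤ 1 := by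
  rw [abs_le]; constructor <;> rcases h with h | h <;> nlinarith

lemma mem_Yset_bounds {y : L} (hy : y ∈ Yset) :
    (0 ≤ y 0 ∧ y 0 ≤ 2) ∧ ∀ i : Fin 6, |y i.succ| ≤ 1 := by
  obtain ⟨h1, h2⟩ := hy
  rw [B_hv_eq] at h1
  rw [B_self_eq] at h2
  have hsum : ∑ i : Fin 6, y i.succ = 1 - 3 * y 0 := by linarith
  have hsq : ∑ i : Fin 6, y i.succ ^ 2 = y 0 ^ 2 + 1 := by linarith
  have hcs := sq_sum_le_card_mul_sum_sq (s := Finset.univ) (f := fun i : Fin 6 => y i.succ)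
  simp only [Finset.card_univ, Fintype.card_fin, Nat.cast_ofNat, hsum, hsq] at hcs
  have hy0 : 0 ≤ y 0 ∧ y 0 ≤ 2 := by constructor <;> nlinarith
  -- The terms of `∑ j, y j.succ * (y j.succ ± 1)` are nonnegative and the sums are known.
  refine ⟨hy0, fun i => abs_le_one_of_mul_le ?_⟩
  have key (s : ℤ) (hs : s = 1 ∨ s = -1) :
      y i.succ * (y i.succ + s) ≤ y 0 ^ 2 + 1 + s * (1 - 3 * y 0) := by
    have hexp : ∑ j : Fin 6, y j.succ * (y j.succ + s) = y 0 ^ 2 + 1 + s * (1 - 3 * y 0) := by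
      rw [← hsq, ← hsum, Finset.mul_sum, ← Finset.sum_add_distrib]
      exact Finset.sum_congr rfl fun j _ => by ring
    rw [← hexp]
    refine Finset.single_le_sum (f := fun j : Fin 6 => y j.succ * (y j.succ + s))
      (fun j _ => ?_) (Finset.mem_univ i)
    rcases hs with rfl | rfl <;>
      nlinarith [sq_nonneg (2 * y j.succ + 1), sq_nonneg (2 * y j.succ - 1)]
  have hp := key 1 (.inl rfl)
  have hm := key (-1) (.inr rfl)
  obtain ⟨h0, h2⟩ := hy0
  interval_cases h : y 0 <;> [right; left; left] <;> linarith

def lines : Fin 27 → L :=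
  ![![0, 0, 0, 0, 0, 0, 1],
    ![0, 0, 0, 0, 0, 1, 0],
    ![0, 0, 0, 0, 1, 0, 0],
    ![0, 0, 0, 1, 0, 0, 0],
    ![1, -1, 0, -1, 0, 0, 0],
    ![0, 1, 0, 0, 0, 0, 0],
    ![0, 0, 1, 0, 0, 0, 0],
    ![1, -1, -1, 0, 0, 0, 0],
    ![1, -1, 0, 0, -1, 0, 0],
    ![1, -1, 0, 0, 0, -1, 0],
    ![1, -1, 0, 0, 0, 0, -1],
    ![1, 0, -1, -1, 0, 0, 0],
    ![1, 0, -1, 0, -1, 0, 0],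
    ![1, 0, -1, 0, 0, -1, 0],
    ![1, 0, -1, 0, 0, 0, -1],
    ![1, 0, 0, -1, -1, 0, 0],
    ![1, 0, 0, -1, 0, -1, 0],
    ![1, 0, 0, -1, 0, 0, -1],
    ![1, 0, 0, 0, -1, -1, 0],
    ![1, 0, 0, 0, -1, 0, -1],
    ![1, 0, 0, 0, 0, -1, -1],
    ![2, -1, -1, -1, -1, -1, 0],
    ![2, -1, -1, -1, -1, 0, -1],
    ![2, -1, -1, -1, 0, -1, -1],
    ![2, -1, -1, 0, -1, -1, -1],
    ![2, -1, 0, -1, -1, -1, -1],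
    ![2, 0, -1, -1, -1, -1, -1]]

lemma lines_mem_Yset (c : Fin 27) : lines c ∈ Yset := by
  revert c; unfold Yset; decide

lemma B_lines_eq_zero_or_eq_one : ∀ c d : Fin 27, c ≠ d →
    B (lines c) (lines d) = 0 ∨ B (lines c) (lines d) = 1 := by
  decide

def lineBox : Fin 7 → Finset ℤ := Fin.cons {0, 1, 2} fun _ => {-1, 0, 1}

lemma mem_piFinset_lineBox {y : L} (hy : y ∈ Yset) : y ∈ Fintype.piFinset lineBox := by
  obtain ⟨⟨h0, h2⟩, hsucc⟩ := mem_Yset_bounds hy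
  rw [Fintype.mem_piFinset]
  refine Fin.cases ?_ fun i => ?_
  · simp only [lineBox, Fin.cons_zero, Finset.mem_insert, Finset.mem_singleton]; omega
  · have := abs_le.1 (hsucc i)
    simp only [lineBox, Fin.cons_succ, Finset.mem_insert, Finset.mem_singleton]; omega

set_option maxRecDepth 10000 in
lemma exists_lines_eq_of_mem_piFinset_lineBox :
    ∀ y ∈ Fintype.piFinset lineBox, B hv y = 1 → B y y = -1 → ∃ c, lines c = y := by
  decide

lemma exists_lines_eq {y : L} (hy : y ∈ Yset) : ∃ c, lines c = y :=
  exists_lines_eq_of_mem_piFinset_lineBox y (mem_piFinset_lineBox hy) hy.1 hy.2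

lemma B_eq_zero_or_eq_one_of_ne {y y' : L} (hy : y ∈ Yset) (hy' : y' ∈ Yset) (hne : y ≠ y') :
    B y y' = 0 ∨ B y y' = 1 := by
  obtain ⟨c, rfl⟩ := exists_lines_eq hy
  obtain ⟨d, rfl⟩ := exists_lines_eq hy'
  exact B_lines_eq_zero_or_eq_one c d (ne_of_apply_ne lines hne)

lemma span_Yset_eq_top : Submodule.span ℤ Yset = ⊤ := by
  have hsucc (i : Fin 6) : Pi.single i.succ 1 ∈ Yset := by revert i; unfold Yset; decide
  have h0 : (Pi.single 0 1 : L) = ![1, -1, -1, 0, 0, 0, 0] + Pi.single 1 1 + Pi.single 2 1 := by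
    decide
  have hℓ : (![1, -1, -1, 0, 0, 0, 0] : L) ∈ Yset := by unfold Yset; decide
  rw [eq_top_iff, ← (Pi.basisFun ℤ (Fin 7)).span_eq, Submodule.span_le]
  rintro _ ⟨i, rfl⟩
  rw [Pi.basisFun_apply]
  refine Fin.cases ?_ (fun j => Submodule.subset_span (hsucc j)) i
  rw [h0]
  exact add_mem (add_mem (Submodule.subset_span hℓ) (Submodule.subset_span (hsucc 0)))
    (Submodule.subset_span (hsucc 1))

lemma eq_of_eqOn_Yset {g g' : L ≃ₗ[ℤ] L} (h : Set.EqOn g g' Yset) : g = g' :=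
  LinearEquiv.toLinearMap_injective (LinearMap.ext_on span_Yset_eq_top h)

lemma lineAut_injective {g g' : L ≃ₗ[ℤ] L} (hg : g ∈ isometryFixingHv)
    (hg' : g' ∈ isometryFixingHv) (h : lineAut hg = lineAut hg') : g = g' :=
  eq_of_eqOn_Yset fun y hy => congrArg Subtype.val (RelIso.ext_iff.1 h ⟨y, hy⟩)

lemma B_graphAut_apply (φ : Ω ≃g Ω) (a b : Yset) : B (φ a) (φ b) = B a b := by
  by_cases hab : a = b
  · rw [hab, (φ b).2.2, b.2.2]
  have hφ : φ a ≠ φ b := φ.injective.ne hab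
  have hadj : B (φ a) (φ b) = 1 ↔ B a b = 1 :=
    ⟨fun h => (φ.map_adj_iff.1 ⟨hφ, h⟩).2, fun h => (φ.map_adj_iff.2 ⟨hab, h⟩).2⟩
  rcases B_eq_zero_or_eq_one_of_ne (φ a).2 (φ b).2 (Subtype.val_injective.ne hφ) with h | h <;>
    rcases B_eq_zero_or_eq_one_of_ne a.2 b.2 (Subtype.val_injective.ne hab) with h' | h' <;>
    simp_all

-- A plain function rather than `reflection`, so that the kernel can evaluate words for `decide`.
def reflect (α x : L) : L := x + B x α • α

def applyWord (w : List L) (x : L) : L := w.foldr reflect x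

lemma exists_mem_G_coe_eq_applyWord (w : List L) (hw : ∀ α ∈ w, α ∈ Rset) :
    ∃ g ∈ G, ⇑g = applyWord w := by
  induction w with
  | nil => exact ⟨1, one_mem G, rfl⟩
  | cons α w ih =>
    obtain ⟨g, hg, hgw⟩ := ih fun β hβ => hw β (List.mem_cons_of_mem α hβ)
    have hα := hw α List.mem_cons_self
    refine ⟨reflection α hα.2 * g, mul_mem (reflection_mem_G hα) hg, funext fun x => ?_⟩
    rw [LinearEquiv.mul_apply, reflection_apply, hgw]
    rfl

/- From `k = 5` on, the intersection numbers with the earlier lines determine `lines k`, so the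
empty word suffices. -/
def transporterWords : Fin 27 → List (List L) :=
  ![[[], [![0, 0, 0, 0, 0, -1, 1]], [![0, 0, 0, 0, -1, 0, 1]], [![0, 0, 0, -1, 0, 0, 1]],
     [![0, 0, -1, 0, 0, 0, 1]], [![0, -1, 0, 0, 0, 0, 1]], [![-1, 1, 1, 0, 0, 0, 1]],
     [![-1, 1, 0, 1, 0, 0, 1]], [![-1, 1, 0, 0, 1, 0, 1]], [![-1, 1, 0, 0, 0, 1, 1]],
     [![0, 0, 0, 0, 0, -1, 1], ![-1, 1, 0, 0, 0, 1, 1]], [![-1, 0, 1, 1, 0, 0, 1]],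
     [![-1, 0, 1, 0, 1, 0, 1]], [![-1, 0, 1, 0, 0, 1, 1]],
     [![0, 0, 0, 0, 0, -1, 1], ![-1, 0, 1, 0, 0, 1, 1]], [![-1, 0, 0, 1, 1, 0, 1]],
     [![-1, 0, 0, 1, 0, 1, 1]], [![0, 0, 0, 0, 0, -1, 1], ![-1, 0, 0, 1, 0, 1, 1]],
     [![-1, 0, 0, 0, 1, 1, 1]], [![0, 0, 0, 0, 0, -1, 1], ![-1, 0, 0, 0, 1, 1, 1]],
     [![0, 0, 0, 0, -1, 0, 1], ![-1, 0, 0, 0, 1, 1, 1]], [![-2, 1, 1, 1, 1, 1, 1]],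
     [![0, 0, 0, 0, 0, -1, 1], ![-2, 1, 1, 1, 1, 1, 1]],
     [![0, 0, 0, 0, -1, 0, 1], ![-2, 1, 1, 1, 1, 1, 1]],
     [![0, 0, 0, -1, 0, 0, 1], ![-2, 1, 1, 1, 1, 1, 1]],
     [![0, 0, -1, 0, 0, 0, 1], ![-2, 1, 1, 1, 1, 1, 1]],
     [![0, -1, 0, 0, 0, 0, 1], ![-2, 1, 1, 1, 1, 1, 1]]],
    [[], [![0, 0, 0, 0, -1, 1, 0]], [![0, 0, 0, -1, 0, 1, 0]], [![0, 0, -1, 0, 0, 1, 0]],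
     [![0, -1, 0, 0, 0, 1, 0]], [![-1, 1, 1, 0, 0, 1, 0]], [![-1, 1, 0, 1, 0, 1, 0]],
     [![-1, 1, 0, 0, 1, 1, 0]], [![0, 0, 0, 0, -1, 1, 0], ![-1, 1, 0, 0, 1, 1, 0]],
     [![-1, 0, 1, 1, 0, 1, 0]], [![-1, 0, 1, 0, 1, 1, 0]],
     [![0, 0, 0, 0, -1, 1, 0], ![-1, 0, 1, 0, 1, 1, 0]], [![-1, 0, 0, 1, 1, 1, 0]],
     [![0, 0, 0, 0, -1, 1, 0], ![-1, 0, 0, 1, 1, 1, 0]],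
     [![0, 0, 0, -1, 0, 1, 0], ![-1, 0, 0, 1, 1, 1, 0]],
     [![-1, 1, 1, 0, 0, 1, 0], ![-1, 0, 0, 1, 1, 1, 0]]],
    [[], [![0, 0, 0, -1, 1, 0, 0]], [![0, 0, -1, 0, 1, 0, 0]], [![0, -1, 0, 0, 1, 0, 0]],
     [![-1, 1, 1, 0, 1, 0, 0]], [![-1, 1, 0, 1, 1, 0, 0]],
     [![0, 0, 0, -1, 1, 0, 0], ![-1, 1, 0, 1, 1, 0, 0]], [![-1, 0, 1, 1, 1, 0, 0]],
     [![0, 0, 0, -1, 1, 0, 0], ![-1, 0, 1, 1, 1, 0, 0]],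
     [![0, 0, -1, 0, 1, 0, 0], ![-1, 0, 1, 1, 1, 0, 0]]],
    [[], [![0, 0, -1, 1, 0, 0, 0]], [![0, -1, 0, 1, 0, 0, 0]], [![-1, 1, 1, 1, 0, 0, 0]],
     [![0, 0, -1, 1, 0, 0, 0], ![-1, 1, 1, 1, 0, 0, 0]],
     [![0, -1, 0, 1, 0, 0, 0], ![-1, 1, 1, 1, 0, 0, 0]]],
    [[![0, -1, 1, 0, 0, 0, 0]], []],
    [[]], [[]], [[]], [[]], [[]], [[]], [[]], [[]], [[]],
    [[]], [[]], [[]], [[]], [[]], [[]], [[]], [[]], [[]],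
    [[]], [[]], [[]], [[]]]

lemma transporterWords_mem_Rset :
    ∀ k, ∀ w ∈ transporterWords k, ∀ α ∈ w, α ∈ Rset := by
  unfold Rset; decide

set_option maxRecDepth 10000 in
lemma exists_transporterWord : ∀ k c : Fin 27,
    (∀ j < k, B (lines c) (lines j) = B (lines k) (lines j)) →
    ∃ w ∈ transporterWords k,
      applyWord w (lines c) = lines k ∧ ∀ j < k, applyWord w (lines j) = lines j := by
  decide

lemma exists_mem_G_transporter (k c : Fin 27)
    (hc : ∀ j < k, B (lines c) (lines j) = B (lines k) (lines j)) :
    ∃ g ∈ G, g (lines c) = lines k ∧ ∀ j < k, g (lines j) = lines j := by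
  obtain ⟨w, hw, hwc, hwfix⟩ := exists_transporterWord k c hc
  obtain ⟨g, hg, hgw⟩ := exists_mem_G_coe_eq_applyWord w (transporterWords_mem_Rset k w hw)
  rw [← hgw] at hwc hwfix
  exact ⟨g, hg, hwc, hwfix⟩

lemma exists_mem_G_apply_eq_lines (ψ : Fin 27 → L) (hψ : ∀ j, ψ j ∈ Yset)
    (hB : ∀ i j, B (ψ i) (ψ j) = B (lines i) (lines j)) :
    ∃ g ∈ G, ∀ j, g (ψ j) = lines j := by
  suffices ∀ n ≤ 27, ∃ g ∈ G, ∀ j : Fin 27, (j : ℕ) < n → g (ψ j) = lines j by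
    obtain ⟨g, hg, h⟩ := this 27 le_rfl
    exact ⟨g, hg, fun j => h j j.2⟩
  intro n
  induction n with
  | zero => exact fun _ => ⟨1, one_mem G, fun j hj => absurd hj (Nat.not_lt_zero _)⟩
  | succ n ih =>
    intro hn
    obtain ⟨g, hg, hfix⟩ := ih (by omega)
    let k : Fin 27 := ⟨n, hn⟩
    have hgk := (apply_mem_Yset_iff (G_le_isometryFixingHv hg) _).2 (hψ k)
    obtain ⟨c, hc⟩ := exists_lines_eq hgk
    have hcompat (j : Fin 27) (hj : j < k) : B (lines c) (lines j) = B (lines k) (lines j) :=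
      calc B (lines c) (lines j) = B (g (ψ k)) (g (ψ j)) := by rw [hc, hfix j hj]
        _ = B (lines k) (lines j) := by rw [(G_le_isometryFixingHv hg).1, hB]
    obtain ⟨t, ht, htc, htfix⟩ := exists_mem_G_transporter k c hcompat
    refine ⟨t * g, mul_mem ht hg, fun j hj => ?_⟩
    rw [LinearEquiv.mul_apply]
    rcases Nat.lt_succ_iff_lt_or_eq.1 hj with hj | hj
    · rw [hfix j hj, htfix j hj]
    · obtain rfl : j = k := Fin.ext hj
      rw [← hc, htc]

lemma exists_lineAut_eq (φ : Ω ≃g Ω) :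
    ∃ (g : L ≃ₗ[ℤ] L) (hg : g ∈ G), lineAut (G_le_isometryFixingHv hg) = φ := by
  let ψ (j : Fin 27) : L := φ ⟨lines j, lines_mem_Yset j⟩
  obtain ⟨g, hg, hgψ⟩ :=
    exists_mem_G_apply_eq_lines ψ (fun j => (φ _).2) (fun i j => B_graphAut_apply φ _ _)
  refine ⟨g⁻¹, inv_mem hg, RelIso.ext fun y => Subtype.ext ?_⟩
  obtain ⟨c, hc⟩ := exists_lines_eq y.2
  obtain rfl : ⟨lines c, lines_mem_Yset c⟩ = y := Subtype.ext hc
  exact g.symm_apply_eq.2 (hgψ c).symm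

/-- Every `g ∈ G` maps `Y` bijectively to itself; the induced permutations of `Y` are
automorphisms of `Ω`, and the resulting map `G → Aut(Ω)` (which is automatically a group
homomorphism) is bijective. -/
theorem weyl_is_graph_automorphism_group :
    (∀ g ∈ G, Set.BijOn (fun x => g x) Yset Yset) ∧
    ∃ F : ↥G → (Ω ≃g Ω),
      Function.Bijective F ∧
      ∀ (g : ↥G) (y : ↥Yset), (((F g) y : ↥Yset) : L) = (g : L ≃ₗ[ℤ] L) (y : L) := by
  refine ⟨fun g hg => bijOn_Yset (G_le_isometryFixingHv hg),
    fun g => lineAut (G_le_isometryFixingHv g.2), ⟨?_, ?_⟩, fun _ _ => rfl⟩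
  · exact fun g g' h => Subtype.ext (lineAut_injective _ _ h)
  · intro φ
    obtain ⟨g, hg, rfl⟩ := exists_lineAut_eq φ
    exact ⟨⟨g, hg⟩, rfl⟩
end

section
/- Under the action of C on Y there are exactly 3 fixed points; the remaining 24 elements of Y fall into exactly six C-orbits, each of cardinality 4; and the stabilizers in C of points of these six orbits are precisely the six subgroups of C of order 4 generated by two of the reflections s_{β_i}, s_{β_j} (1 ≤ i < j ≤ 4), each such subgroup occurring as the stabilizer for exactly one of the six orbits. -/
open scoped TensorProduct

lemma B_add_smul_left (x y α : L) (c : ℤ) : B (x + c • α) y = B x y + c * B α y := by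
  simp only [B, Pi.add_apply, Pi.smul_apply, smul_eq_mul]; ring

/-- The reflection `s_α(x) = x + B(x,α)·α` as a linear map. -/
def sLinMap (α : L) : L →ₗ[ℤ] L where
  toFun x := x + B x α • α
  map_add' x y := by
    funext i
    simp only [B, Pi.add_apply, Pi.smul_apply, smul_eq_mul]
    ring
  map_smul' c x := by
    funext i
    simp only [B, Pi.add_apply, Pi.smul_apply, smul_eq_mul, RingHom.id_apply]
    ring

lemma sLinMap_apply (α x : L) : sLinMap α x = x + B x α • α := rfl

/-- The reflection `s_α` as a linear automorphism of `L`, for `α` with `B(α,α) = −2`. -/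
def sEquiv (α : L) (hα : B α α = -2) : L ≃ₗ[ℤ] L :=
  LinearEquiv.ofLinear (sLinMap α) (sLinMap α)
    (by
      refine LinearMap.ext fun x => ?_
      simp only [LinearMap.comp_apply, LinearMap.id_apply, sLinMap_apply]
      rw [B_add_smul_left, hα]
      have h : B x α + B x α * (-2) = -(B x α) := by ring
      rw [h, neg_smul]
      abel)
    (by
      refine LinearMap.ext fun x => ?_
      simp only [LinearMap.comp_apply, LinearMap.id_apply, sLinMap_apply]
      rw [B_add_smul_left, hα]
      have h : B x α + B x α * (-2) = -(B x α) := by ring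
      rw [h, neg_smul]
      abel)

lemma sEquiv_apply (α : L) (hα : B α α = -2) (x : L) : sEquiv α hα x = x + B x α • α := rfl

/-- The four pairwise orthogonal roots `β₁ = e₁ − e₂`, `β₂ = e₃ − e₄`, `β₃ = e₅ − e₆`,
`β₄ = 2ℓ − e₁ − ⋯ − e₆`. -/
def βv : Fin 4 → L :=
  ![![0, 1, -1, 0, 0, 0, 0], ![0, 0, 0, 1, -1, 0, 0], ![0, 0, 0, 0, 0, 1, -1],
    ![2, -1, -1, -1, -1, -1, -1]]

lemma βv_norm : ∀ i, B (βv i) (βv i) = -2 := by decide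

lemma βv_orth_h : ∀ i, B hv (βv i) = 0 := by decide

/-- The four commuting reflections `s_{β₁}, …, s_{β₄}`. -/
def sβ (i : Fin 4) : L ≃ₗ[ℤ] L := sEquiv (βv i) (βv_norm i)

/-- The maximal cube `C = ⟨s_{β₁}, s_{β₂}, s_{β₃}, s_{β₄}⟩`. -/
def C : Subgroup (L ≃ₗ[ℤ] L) := Subgroup.closure (Set.range sβ)

/-- The lines fixed by every element of `C`. -/
def Cfix : Set L := {y | y ∈ Yset ∧ ∀ g ∈ C, g y = y}

/-- The `C`-orbit of a point `y ∈ L`. -/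
def orbitOf (y : L) : Set L := {z | ∃ g ∈ C, g y = z}

/-- The `C`-orbits of the non-fixed lines. -/
def Orbs : Set (Set L) := {O | ∃ y, y ∈ Yset ∧ y ∉ Cfix ∧ O = orbitOf y}

/-- The stabilizer in `C` of a point `y ∈ L`. -/
def stabOf (y : L) : Set (L ≃ₗ[ℤ] L) := {g | g ∈ C ∧ g y = y}

/-! ### Auxiliary machinery -/

/-- The reflection in `α` as a plain function. -/
def act (α x : L) : L := x + B x α • α

lemma sβ_apply (i : Fin 4) (x : L) : sβ i x = act (βv i) x := rfl

/-- The product `s₀^a s₁^b s₂^c s₃^d`. -/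
def pr (a b c d : Bool) : L ≃ₗ[ℤ] L :=
  cond a (sβ 0) 1 * (cond b (sβ 1) 1 * (cond c (sβ 2) 1 * cond d (sβ 3) 1))

def acts (b : Bool) (α : L) (x : L) : L := bif b then act α x else x

def prAct (a b c d : Bool) (x : L) : L :=
  acts a (βv 0) (acts b (βv 1) (acts c (βv 2) (acts d (βv 3) x)))

lemma pr_apply (a b c d : Bool) (x : L) : pr a b c d x = prAct a b c d x := by
  cases a <;> cases b <;> cases c <;> cases d <;> rfl

lemma B_add_smul_right (x y α : L) (c : ℤ) : B y (x + c • α) = B y x + c * B y α := by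
  simp only [B, Pi.add_apply, Pi.smul_apply, smul_eq_mul]; ring

lemma act_act (α : L) (hα : B α α = -2) (x : L) : act α (act α x) = x := by
  unfold act
  rw [B_add_smul_left, hα]
  rw [show B x α + B x α * (-2) = -(B x α) by ring, neg_smul]
  abel

lemma sβ_mul_self (i : Fin 4) : sβ i * sβ i = 1 :=
  LinearEquiv.ext fun x => act_act (βv i) (βv_norm i) x

lemma sβ_inv (i : Fin 4) : (sβ i)⁻¹ = sβ i := inv_eq_of_mul_eq_one_right (sβ_mul_self i)

lemma βv_orth : ∀ i j : Fin 4, i ≠ j → B (βv i) (βv j) = 0 := by decide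

lemma act_comm (α γ : L) (h1 : B γ α = 0) (h2 : B α γ = 0) (x : L) :
    act α (act γ x) = act γ (act α x) := by
  unfold act
  rw [B_add_smul_left, B_add_smul_left, h1, h2]
  rw [mul_zero, add_zero, mul_zero, add_zero]
  abel

lemma sβ_comm (i j : Fin 4) (h : i ≠ j) : sβ i * sβ j = sβ j * sβ i :=
  LinearEquiv.ext fun x => act_comm (βv i) (βv j) (βv_orth j i (Ne.symm h)) (βv_orth i j h) x

lemma sβ_swap (i j : Fin 4) (h : i ≠ j) (g : L ≃ₗ[ℤ] L) :
    sβ i * (sβ j * g) = sβ j * (sβ i * g) := by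
  rw [← mul_assoc, sβ_comm i j h, mul_assoc]

lemma sβ_cond_swap (i j : Fin 4) (h : i ≠ j) (b : Bool) (g : L ≃ₗ[ℤ] L) :
    sβ i * (cond b (sβ j) 1 * g) = cond b (sβ j) 1 * (sβ i * g) := by
  cases b
  · simp
  · exact sβ_swap i j h g

lemma sβ_cancel (i : Fin 4) (g : L ≃ₗ[ℤ] L) : sβ i * (sβ i * g) = g := by
  rw [← mul_assoc, sβ_mul_self, one_mul]

lemma mulpr0 (a b c d : Bool) : sβ 0 * pr a b c d = pr (!a) b c d := by
  unfold pr; cases a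
  · simp
  · rw [show cond true (sβ 0) 1 = sβ 0 from rfl, sβ_cancel]; simp

lemma mulpr1 (a b c d : Bool) : sβ 1 * pr a b c d = pr a (!b) c d := by
  unfold pr
  rw [sβ_cond_swap 1 0 (by decide)]
  cases b
  · simp
  · rw [show cond true (sβ 1) 1 = sβ 1 from rfl, sβ_cancel]; simp

lemma mulpr2 (a b c d : Bool) : sβ 2 * pr a b c d = pr a b (!c) d := by
  unfold pr
  rw [sβ_cond_swap 2 0 (by decide), sβ_cond_swap 2 1 (by decide)]
  cases c
  · simp
  · rw [show cond true (sβ 2) 1 = sβ 2 from rfl, sβ_cancel]; simp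

lemma mulpr3 (a b c d : Bool) : sβ 3 * pr a b c d = pr a b c (!d) := by
  unfold pr
  rw [sβ_cond_swap 3 0 (by decide), sβ_cond_swap 3 1 (by decide), sβ_cond_swap 3 2 (by decide)]
  cases d
  · simp
  · rw [show cond true (sβ 3) 1 = sβ 3 from rfl, sβ_mul_self]; simp

lemma mem_C_rep (g : L ≃ₗ[ℤ] L) (hg : g ∈ C) : ∃ a b c d : Bool, g = pr a b c d := by
  induction hg using Subgroup.closure_induction_left with
  | one => exact ⟨false, false, false, false, by simp [pr]⟩
  | mul_left x hx y hy ih =>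
    obtain ⟨i, rfl⟩ := hx
    obtain ⟨a, b, c, d, rfl⟩ := ih
    fin_cases i
    · exact ⟨!a, b, c, d, by exact mulpr0 a b c d⟩
    · exact ⟨a, !b, c, d, by exact mulpr1 a b c d⟩
    · exact ⟨a, b, !c, d, by exact mulpr2 a b c d⟩
    · exact ⟨a, b, c, !d, by exact mulpr3 a b c d⟩
  | inv_mul_cancel x hx y hy ih =>
    obtain ⟨i, rfl⟩ := hx
    obtain ⟨a, b, c, d, rfl⟩ := ih
    rw [sβ_inv]
    fin_cases i
    · exact ⟨!a, b, c, d, by exact mulpr0 a b c d⟩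
    · exact ⟨a, !b, c, d, by exact mulpr1 a b c d⟩
    · exact ⟨a, b, !c, d, by exact mulpr2 a b c d⟩
    · exact ⟨a, b, c, !d, by exact mulpr3 a b c d⟩

lemma cond_mem_C (b : Bool) (i : Fin 4) : cond b (sβ i) 1 ∈ C := by
  cases b
  · exact one_mem _
  · exact Subgroup.subset_closure ⟨i, rfl⟩

lemma pr_mem_C (a b c d : Bool) : pr a b c d ∈ C :=
  mul_mem (cond_mem_C a 0) (mul_mem (cond_mem_C b 1) (mul_mem (cond_mem_C c 2) (cond_mem_C d 3)))

lemma sβ_mem_C (i : Fin 4) : sβ i ∈ C := Subgroup.subset_closure ⟨i, rfl⟩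

lemma closure_fixes {S : Set (L ≃ₗ[ℤ] L)} (y : L) (hS : ∀ s ∈ S, s y = y) :
    ∀ g ∈ Subgroup.closure S, g y = y := by
  intro g hg
  induction hg using Subgroup.closure_induction_left with
  | one => rfl
  | mul_left x hx z hz ih => show x (z y) = y; rw [ih, hS x hx]
  | inv_mul_cancel x hx z hz ih =>
    show x⁻¹ (z y) = y
    rw [ih]
    exact (LinearEquiv.symm_apply_eq x).2 (hS x hx).symm

/-! ### The 27 lines -/

def Y27 : Finset L := {![0,0,0,0,0,0,1], ![0,0,0,0,0,1,0], ![0,0,0,0,1,0,0], ![0,0,0,1,0,0,0], ![0,0,1,0,0,0,0], ![0,1,0,0,0,0,0], ![1,-1,-1,0,0,0,0], ![1,-1,0,-1,0,0,0], ![1,-1,0,0,-1,0,0], ![1,-1,0,0,0,-1,0], ![1,-1,0,0,0,0,-1], ![1,0,-1,-1,0,0,0], ![1,0,-1,0,-1,0,0], ![1,0,-1,0,0,-1,0], ![1,0,-1,0,0,0,-1], ![1,0,0,-1,-1,0,0], ![1,0,0,-1,0,-1,0], ![1,0,0,-1,0,0,-1], ![1,0,0,0,-1,-1,0], ![1,0,0,0,-1,0,-1],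 ![1,0,0,0,0,-1,-1], ![2,-1,-1,-1,-1,-1,0], ![2,-1,-1,-1,-1,0,-1], ![2,-1,-1,-1,0,-1,-1], ![2,-1,-1,0,-1,-1,-1], ![2,-1,0,-1,-1,-1,-1], ![2,0,-1,-1,-1,-1,-1]}

def fixF : Finset L := {![1,-1,-1,0,0,0,0], ![1,0,0,-1,-1,0,0], ![1,0,0,0,0,-1,-1]}

def orbF : Fin 6 → Finset L := ![({![0,0,0,0,0,0,1], ![0,0,0,0,0,1,0], ![2,-1,-1,-1,-1,-1,0], ![2,-1,-1,-1,-1,0,-1]} : Finset L), ({![0,0,0,0,1,0,0], ![0,0,0,1,0,0,0], ![2,-1,-1,-1,0,-1,-1], ![2,-1,-1,0,-1,-1,-1]} : Finset L), ({![0,0,1,0,0,0,0], ![0,1,0,0,0,0,0], ![2,-1,0,-1,-1,-1,-1], ![2,0,-1,-1,-1,-1,-1]} : Finset L), ({![1,-1,0,-1,0,0,0], ![1,-1,0,0,-1,0,0], ![1,0,-1,-1,0,0,0], ![1,0,-1,0,-1,0,0]} : Finset L), ({![1,-1,0,0,0,-1,0], ![1,-1,0,0,0,0,-1], ![1,0,-1,0,0,-1,0],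 ![1,0,-1,0,0,0,-1]} : Finset L), ({![1,0,0,-1,0,-1,0], ![1,0,0,-1,0,0,-1], ![1,0,0,0,-1,-1,0], ![1,0,0,0,-1,0,-1]} : Finset L)]

def pairs : Fin 6 → Fin 4 × Fin 4 := ![(0, 1), (0, 2), (1, 2), (2, 3), (1, 3), (0, 3)]

def reps : Fin 6 → L := ![![0,0,0,0,0,0,1], ![0,0,0,0,1,0,0], ![0,0,1,0,0,0,0], ![1,-1,0,-1,0,0,0], ![1,-1,0,0,0,-1,0], ![1,0,0,-1,0,-1,0]]

lemma int01 (m : ℤ) : 0 ≤ m * (m - 1) := by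
  rcases le_or_gt 1 m with h | h
  · exact mul_nonneg (by omega) (by omega)
  · have h2 : 0 ≤ (-m) * (1 - m) := mul_nonneg (by omega) (by omega)
    nlinarith [h2]

lemma Y27_sub_Yset : ∀ y ∈ Y27, B hv y = 1 ∧ B y y = -1 := by decide

set_option maxHeartbeats 1000000 in
lemma Yset_sub_Y27 : ∀ y ∈ Yset, y ∈ Y27 := by
  intro y hy
  obtain ⟨a, m1, m2, m3, m4, m5, m6, rfl⟩ :
      ∃ a m1 m2 m3 m4 m5 m6 : ℤ, y = ![a, m1, m2, m3, m4, m5, m6] :=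
    ⟨y 0, y 1, y 2, y 3, y 4, y 5, y 6, by funext k; fin_cases k <;> rfl⟩
  have hS : 3*a + (m1+m2+m3+m4+m5+m6) = 1 := by
    have h1 : 3*a - (-1*m1 + -1*m2 + -1*m3 + -1*m4 + -1*m5 + -1*m6) = 1 := hy.1
    linarith
  have hQ : a*a - (m1*m1+m2*m2+m3*m3+m4*m4+m5*m5+m6*m6) = -1 := hy.2
  have hCS : (m1+m2+m3+m4+m5+m6)*(m1+m2+m3+m4+m5+m6)
      ≤ 6*(m1*m1+m2*m2+m3*m3+m4*m4+m5*m5+m6*m6) := by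
    nlinarith [sq_nonneg (m1-m2), sq_nonneg (m1-m3), sq_nonneg (m1-m4), sq_nonneg (m1-m5),
      sq_nonneg (m1-m6), sq_nonneg (m2-m3), sq_nonneg (m2-m4), sq_nonneg (m2-m5),
      sq_nonneg (m2-m6), sq_nonneg (m3-m4), sq_nonneg (m3-m5), sq_nonneg (m3-m6),
      sq_nonneg (m4-m5), sq_nonneg (m4-m6), sq_nonneg (m5-m6)]
  have ha0 : 0 ≤ a := by nlinarith
  have ha2 : a ≤ 2 := by nlinarith [sq_nonneg (a-2)]
  interval_cases a
  · have e1 : m1*(m1-1) = 0 := by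
      linarith [int01 m1, int01 m2, int01 m3, int01 m4, int01 m5, int01 m6]
    have e2 : m2*(m2-1) = 0 := by
      linarith [int01 m1, int01 m2, int01 m3, int01 m4, int01 m5, int01 m6]
    have e3 : m3*(m3-1) = 0 := by
      linarith [int01 m1, int01 m2, int01 m3, int01 m4, int01 m5, int01 m6]
    have e4 : m4*(m4-1) = 0 := by
      linarith [int01 m1, int01 m2, int01 m3, int01 m4, int01 m5, int01 m6]
    have e5 : m5*(m5-1) = 0 := by
      linarith [int01 m1, int01 m2, int01 m3, int01 m4, int01 m5, int01 m6]
    have e6 : m6*(m6-1) = 0 := by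
      linarith [int01 m1, int01 m2, int01 m3, int01 m4, int01 m5, int01 m6]
    have d1 : m1 = 0 ∨ m1 = 1 := by have := mul_eq_zero.mp e1; omega
    have d2 : m2 = 0 ∨ m2 = 1 := by have := mul_eq_zero.mp e2; omega
    have d3 : m3 = 0 ∨ m3 = 1 := by have := mul_eq_zero.mp e3; omega
    have d4 : m4 = 0 ∨ m4 = 1 := by have := mul_eq_zero.mp e4; omega
    have d5 : m5 = 0 ∨ m5 = 1 := by have := mul_eq_zero.mp e5; omega
    have d6 : m6 = 0 ∨ m6 = 1 := by have := mul_eq_zero.mp e6; omega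
    clear hy hQ hCS e1 e2 e3 e4 e5 e6
    rcases d1 with rfl | rfl <;> rcases d2 with rfl | rfl <;> rcases d3 with rfl | rfl <;>
      rcases d4 with rfl | rfl <;> rcases d5 with rfl | rfl <;> rcases d6 with rfl | rfl <;>
      first
        | (exfalso; omega)
        | decide
  · have e1 : m1*(m1+1) = 0 := by
      linarith [int01 (m1+1), int01 (m2+1), int01 (m3+1), int01 (m4+1), int01 (m5+1), int01 (m6+1)]
    have e2 : m2*(m2+1) = 0 := by
      linarith [int01 (m1+1), int01 (m2+1), int01 (m3+1), int01 (m4+1), int01 (m5+1), int01 (m6+1)]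
    have e3 : m3*(m3+1) = 0 := by
      linarith [int01 (m1+1), int01 (m2+1), int01 (m3+1), int01 (m4+1), int01 (m5+1), int01 (m6+1)]
    have e4 : m4*(m4+1) = 0 := by
      linarith [int01 (m1+1), int01 (m2+1), int01 (m3+1), int01 (m4+1), int01 (m5+1), int01 (m6+1)]
    have e5 : m5*(m5+1) = 0 := by
      linarith [int01 (m1+1), int01 (m2+1), int01 (m3+1), int01 (m4+1), int01 (m5+1), int01 (m6+1)]
    have e6 : m6*(m6+1) = 0 := by
      linarith [int01 (m1+1), int01 (m2+1), int01 (m3+1), int01 (m4+1), int01 (m5+1), int01 (m6+1)]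
    have d1 : m1 = 0 ∨ m1 = -1 := by have := mul_eq_zero.mp e1; omega
    have d2 : m2 = 0 ∨ m2 = -1 := by have := mul_eq_zero.mp e2; omega
    have d3 : m3 = 0 ∨ m3 = -1 := by have := mul_eq_zero.mp e3; omega
    have d4 : m4 = 0 ∨ m4 = -1 := by have := mul_eq_zero.mp e4; omega
    have d5 : m5 = 0 ∨ m5 = -1 := by have := mul_eq_zero.mp e5; omega
    have d6 : m6 = 0 ∨ m6 = -1 := by have := mul_eq_zero.mp e6; omega
    clear hy hQ hCS e1 e2 e3 e4 e5 e6
    rcases d1 with rfl | rfl <;> rcases d2 with rfl | rfl <;> rcases d3 with rfl | rfl <;>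
      rcases d4 with rfl | rfl <;> rcases d5 with rfl | rfl <;> rcases d6 with rfl | rfl <;>
      first
        | (exfalso; omega)
        | decide
  · have e1 : (m1+1)*m1 = 0 := by
      linarith [int01 (m1+1), int01 (m2+1), int01 (m3+1), int01 (m4+1), int01 (m5+1), int01 (m6+1)]
    have e2 : (m2+1)*m2 = 0 := by
      linarith [int01 (m1+1), int01 (m2+1), int01 (m3+1), int01 (m4+1), int01 (m5+1), int01 (m6+1)]
    have e3 : (m3+1)*m3 = 0 := by
      linarith [int01 (m1+1), int01 (m2+1), int01 (m3+1), int01 (m4+1), int01 (m5+1), int01 (m6+1)]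
    have e4 : (m4+1)*m4 = 0 := by
      linarith [int01 (m1+1), int01 (m2+1), int01 (m3+1), int01 (m4+1), int01 (m5+1), int01 (m6+1)]
    have e5 : (m5+1)*m5 = 0 := by
      linarith [int01 (m1+1), int01 (m2+1), int01 (m3+1), int01 (m4+1), int01 (m5+1), int01 (m6+1)]
    have e6 : (m6+1)*m6 = 0 := by
      linarith [int01 (m1+1), int01 (m2+1), int01 (m3+1), int01 (m4+1), int01 (m5+1), int01 (m6+1)]
    have d1 : m1 = 0 ∨ m1 = -1 := by have := mul_eq_zero.mp e1; omega
    have d2 : m2 = 0 ∨ m2 = -1 := by have := mul_eq_zero.mp e2; omega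
    have d3 : m3 = 0 ∨ m3 = -1 := by have := mul_eq_zero.mp e3; omega
    have d4 : m4 = 0 ∨ m4 = -1 := by have := mul_eq_zero.mp e4; omega
    have d5 : m5 = 0 ∨ m5 = -1 := by have := mul_eq_zero.mp e5; omega
    have d6 : m6 = 0 ∨ m6 = -1 := by have := mul_eq_zero.mp e6; omega
    clear hy hQ hCS e1 e2 e3 e4 e5 e6
    rcases d1 with rfl | rfl <;> rcases d2 with rfl | rfl <;> rcases d3 with rfl | rfl <;>
      rcases d4 with rfl | rfl <;> rcases d5 with rfl | rfl <;> rcases d6 with rfl | rfl <;>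
      first
        | (exfalso; omega)
        | decide

lemma Yset_eq : Yset = ↑Y27 :=
  Set.ext fun y => ⟨fun h => Yset_sub_Y27 y h, fun h => Y27_sub_Yset y h⟩

/-! ### Decidable facts about the action on the 27 lines -/

lemma D_fix1 : ∀ y ∈ Y27, (∀ i : Fin 4, act (βv i) y = y) → y ∈ fixF := by decide

lemma D_fix2 : ∀ y ∈ fixF, ∀ a b c d : Bool, prAct a b c d y = y := by decide

lemma D_fixY : ∀ y ∈ fixF, y ∈ Y27 := by decide

lemma D_fix_card : fixF.card = 3 := by decide

lemma D_orb1 : ∀ k : Fin 6, ∀ y ∈ orbF k, ∀ a b c d : Bool, prAct a b c d y ∈ orbF k := by decide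

lemma D_orb2 : ∀ k : Fin 6, ∀ y ∈ orbF k, ∀ z ∈ orbF k,
    ∃ a b c d : Bool, prAct a b c d y = z := by decide

lemma D_part : ∀ y ∈ Y27, y ∉ fixF → ∃ k : Fin 6, y ∈ orbF k := by decide

lemma D_orbY : ∀ k : Fin 6, ∀ y ∈ orbF k, y ∈ Y27 ∧ y ∉ fixF := by decide

lemma D_reps : ∀ k : Fin 6, reps k ∈ orbF k := by decide

lemma D_orb_card : ∀ k : Fin 6, (orbF k).card = 4 := by decide

lemma D_img_card : (Finset.image orbF Finset.univ).card = 6 := by decide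

lemma D_stab1 : ∀ k : Fin 6, ∀ y ∈ orbF k, ∀ a b c d : Bool, prAct a b c d y = y →
    ∀ m : Fin 4, m ≠ (pairs k).1 → m ≠ (pairs k).2 → ![a,b,c,d] m = false := by decide

lemma D_stab2 : ∀ k : Fin 6, ∀ y ∈ orbF k,
    act (βv (pairs k).1) y = y ∧ act (βv (pairs k).2) y = y := by decide

lemma D_stab3 : ∀ k : Fin 6, ∀ y ∈ orbF k, ∀ m : Fin 4,
    act (βv m) y = y → m = (pairs k).1 ∨ m = (pairs k).2 := by decide

lemma D_pairs_lt : ∀ k : Fin 6, (pairs k).1 < (pairs k).2 := by decide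

lemma D_pairs_inj : ∀ k k' : Fin 6, pairs k = pairs k' → k = k' := by decide

lemma D_pairs_surj : ∀ i j : Fin 4, i < j → ∃ k : Fin 6, pairs k = (i, j) := by decide

/-! ### Structure lemmas -/

lemma Cfix_eq : Cfix = ↑fixF := by
  ext y
  constructor
  · rintro ⟨hY, hall⟩
    apply D_fix1 y (Yset_sub_Y27 y hY)
    intro i
    have h := hall (sβ i) (sβ_mem_C i)
    rwa [sβ_apply] at h
  · intro h
    refine ⟨Y27_sub_Yset y (D_fixY y h), ?_⟩
    intro g hg
    obtain ⟨a, b, c, d, rfl⟩ := mem_C_rep g hg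
    rw [pr_apply]
    exact D_fix2 y h a b c d

lemma orbit_eq (k : Fin 6) (y : L) (hy : y ∈ orbF k) : orbitOf y = ↑(orbF k) := by
  ext z
  constructor
  · rintro ⟨g, hg, rfl⟩
    obtain ⟨a, b, c, d, rfl⟩ := mem_C_rep g hg
    rw [pr_apply]
    exact D_orb1 k y hy a b c d
  · intro hz
    obtain ⟨a, b, c, d, hp⟩ := D_orb2 k y hy z hz
    exact ⟨pr a b c d, pr_mem_C a b c d, by rw [pr_apply]; exact hp⟩

lemma orb_mem_Orbs (k : Fin 6) : (↑(orbF k) : Set L) ∈ Orbs := by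
  have h := D_orbY k (reps k) (D_reps k)
  refine ⟨reps k, Y27_sub_Yset _ h.1, ?_, (orbit_eq k (reps k) (D_reps k)).symm⟩
  rw [Cfix_eq]
  exact fun hc => h.2 hc

lemma orb_cases (O : Set L) (hO : O ∈ Orbs) : ∃ k : Fin 6, O = ↑(orbF k) := by
  obtain ⟨y, hY, hnf, rfl⟩ := hO
  rw [Cfix_eq] at hnf
  have hy27 := Yset_sub_Y27 y hY
  obtain ⟨k, hk⟩ := D_part y hy27 (fun hc => hnf hc)
  exact ⟨k, orbit_eq k y hk⟩

lemma Orbs_eq : Orbs = (fun F : Finset L => (↑F : Set L)) '' ↑(Finset.image orbF Finset.univ) := by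
  ext O
  constructor
  · intro hO
    obtain ⟨k, rfl⟩ := orb_cases O hO
    exact ⟨orbF k, by simp, rfl⟩
  · rintro ⟨F, hF, rfl⟩
    simp only [Finset.coe_image, Finset.coe_univ, Set.image_univ, Set.mem_range] at hF
    obtain ⟨k, rfl⟩ := hF
    exact orb_mem_Orbs k

lemma cond_mem_pair (i j m : Fin 4) (x : Bool) (hx : x = true → m = i ∨ m = j) :
    cond x (sβ m) 1 ∈ Subgroup.closure {sβ i, sβ j} := by
  cases x
  · exact one_mem _
  · rcases hx rfl with rfl | rfl
    · exact Subgroup.subset_closure (Set.mem_insert _ _)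
    · exact Subgroup.subset_closure (Set.mem_insert_of_mem _ rfl)

lemma pr_mem_pair (i j : Fin 4) (a b c d : Bool)
    (h : ∀ m : Fin 4, m ≠ i → m ≠ j → ![a,b,c,d] m = false) :
    pr a b c d ∈ Subgroup.closure {sβ i, sβ j} := by
  refine mul_mem (cond_mem_pair i j 0 a ?_) (mul_mem (cond_mem_pair i j 1 b ?_)
    (mul_mem (cond_mem_pair i j 2 c ?_) (cond_mem_pair i j 3 d ?_))) <;>
  · intro hx
    by_contra hc
    push_neg at hc
    have hf := h _ hc.1 hc.2
    rw [hx] at hf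
    exact Bool.noConfusion hf

lemma pair_le_C (i j : Fin 4) : Subgroup.closure {sβ i, sβ j} ≤ C := by
  apply (Subgroup.closure_le _).2
  intro x hx
  rcases hx with rfl | rfl
  · exact sβ_mem_C i
  · exact sβ_mem_C j

lemma stab_eq (k : Fin 6) (y : L) (hy : y ∈ orbF k) :
    stabOf y = ↑(Subgroup.closure {sβ (pairs k).1, sβ (pairs k).2}) := by
  ext g
  constructor
  · rintro ⟨hgC, hgy⟩
    obtain ⟨a, b, c, d, rfl⟩ := mem_C_rep g hgC
    rw [pr_apply] at hgy
    exact pr_mem_pair _ _ a b c d (D_stab1 k y hy a b c d hgy)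
  · intro hg
    refine ⟨pair_le_C _ _ hg, closure_fixes y ?_ g hg⟩
    rintro s hs
    rcases hs with rfl | rfl
    · rw [sβ_apply]; exact (D_stab2 k y hy).1
    · rw [sβ_apply]; exact (D_stab2 k y hy).2


/-- `C` has exactly 3 fixed lines; the remaining 24 lines fall into exactly six orbits of
cardinality 4; the stabilizers of points of these orbits are precisely the six subgroups
`⟨s_{βᵢ}, s_{βⱼ}⟩` of order 4 (`i < j`), each occurring for exactly one orbit. -/
theorem cube_action_on_lines :
    Cfix.ncard = 3 ∧
    Orbs.ncard = 6 ∧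
    (∀ O ∈ Orbs, O ⊆ Yset \ Cfix ∧ O.ncard = 4) ∧
    (∀ O ∈ Orbs, ∃ i j : Fin 4, i < j ∧
      ∀ y ∈ O, stabOf y = ↑(Subgroup.closure {sβ i, sβ j})) ∧
    (∀ i j : Fin 4, i < j → ∃! O, O ∈ Orbs ∧
      ∀ y ∈ O, stabOf y = ↑(Subgroup.closure {sβ i, sβ j})) := by
  refine ⟨?_, ?_, ?_, ?_, ?_⟩
  · rw [Cfix_eq, Set.ncard_coe_finset, D_fix_card]
  · rw [Orbs_eq, Set.ncard_image_of_injective _ Finset.coe_injective,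
      Set.ncard_coe_finset, D_img_card]
  · intro O hO
    obtain ⟨k, rfl⟩ := orb_cases O hO
    constructor
    · intro y hy
      have h := D_orbY k y hy
      refine ⟨Y27_sub_Yset y h.1, ?_⟩
      rw [Cfix_eq]
      exact fun hc => h.2 hc
    · rw [Set.ncard_coe_finset]; exact D_orb_card k
  · intro O hO
    obtain ⟨k, rfl⟩ := orb_cases O hO
    exact ⟨(pairs k).1, (pairs k).2, D_pairs_lt k, fun y hy => stab_eq k y hy⟩
  · intro i j hij
    obtain ⟨k, hk⟩ := D_pairs_surj i j hij
    have h1 : (pairs k).1 = i := by rw [hk]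
    have h2 : (pairs k).2 = j := by rw [hk]
    refine ⟨↑(orbF k), ⟨orb_mem_Orbs k, ?_⟩, ?_⟩
    · intro y hy
      rw [stab_eq k y hy, h1, h2]
    · rintro O' ⟨hO', hstab'⟩
      obtain ⟨k', rfl⟩ := orb_cases O' hO'
      have hy' := D_reps k'
      have hi : sβ i ∈ stabOf (reps k') := by
        rw [hstab' (reps k') hy']
        exact Subgroup.subset_closure (Set.mem_insert _ _)
      have hj : sβ j ∈ stabOf (reps k') := by
        rw [hstab' (reps k') hy']
        exact Subgroup.subset_closure (Set.mem_insert_of_mem _ rfl)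
      have hdi := D_stab3 k' (reps k') hy' i (by rw [← sβ_apply]; exact hi.2)
      have hdj := D_stab3 k' (reps k') hy' j (by rw [← sβ_apply]; exact hj.2)
      have hlt := D_pairs_lt k'
      have hp : (pairs k').1 = i ∧ (pairs k').2 = j := by
        rcases hdi with h | h <;> rcases hdj with h' | h'
        · exact absurd hij (by rw [h, h']; exact lt_irrefl _)
        · exact ⟨h.symm, h'.symm⟩
        · exfalso
          rw [h, h'] at hij
          exact absurd (lt_trans hij hlt) (lt_irrefl _)
        · exact absurd hij (by rw [h, h']; exact lt_irrefl _)
      have hkk : k' = k := D_pairs_inj k' k (by rw [hk, Prod.ext_iff]; exact ⟨hp.1, hp.2⟩)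
      rw [hkk]
end
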